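/- If every rewriting rule of an inductively defined sequential specification S has a guard predicate that is closed under projection (i.e., whenever a sequential execution satisfies the guard, so does its projection onto any subset of data values), then S itself is closed under projection: for every u in S and every subset D of data values, the projection of u onto D is again in S. -/
import Mathlib


attribute [local instance] Classical.propDecidable

/-- Label of an operation / method event: a method name, whether the method is
an input method, and the data value (from the infinite domain ℕ). -/
structure Label where
  method : ℕ
  isInput : Bool
  data : ℕ
deriving DecidableEq

/-- An execution, abstracted as a history: a finite set of (completed)
operations, identified by natural numbers, with their labels and a
happens-before relation that is a strict interval order. -/
structure Hist where
  ops : Finset ℕ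
  label : ℕ → Label
  hb : ℕ → ℕ → Prop
  hb_irrefl : ∀ o, ¬ hb o o
  hb_trans : ∀ a b c, hb a b → hb b c → hb a c
  interval : ∀ a b c d, hb a b → hb c d → hb a d ∨ hb c b

/-- Differentiated: each data value is used by at most one input operation. -/
def Differentiated (h : Hist) : Prop :=
  ∀ o1 ∈ h.ops, ∀ o2 ∈ h.ops,
    (h.label o1).isInput = true → (h.label o2).isInput = true →
    (h.label o1).data = (h.label o2).data → o1 = o2

/-- Renaming of data values, applied to a label. -/
def renameL (r : ℕ → ℕ) (l : Label) : Label := ⟨l.method, l.isInput, r l.data⟩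

/-- Renaming applied to an execution. -/
def Hist.renameH (h : Hist) (r : ℕ → ℕ) : Hist :=
  { h with label := fun o => renameL r (h.label o) }

/-- Renaming applied to a sequential execution (a word of labels). -/
def renameW (r : ℕ → ℕ) (u : List Label) : List Label := u.map (renameL r)

/-- A differentiated sequential execution: each data value is used by at most
one input method event. -/
def DiffWord (u : List Label) : Prop :=
  ∀ d, u.countP (fun l => l.isInput && l.data == d) ≤ 1

/-- The execution `h` is linearizable with respect to the sequential execution
`u`: there is a label-preserving bijection (an enumeration `l` of the
operations of `h` mapped by `label` onto `u`) compatible with happens-before. -/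
def Hist.Linearizes (h : Hist) (u : List Label) : Prop :=
  ∃ l : List ℕ, l.Nodup ∧ (∀ o, o ∈ l ↔ o ∈ h.ops) ∧
    l.Pairwise (fun a b => ¬ h.hb b a) ∧ l.map h.label = u

/-- `h` is linearizable with respect to a set of sequential executions. -/
def LinearizableS (h : Hist) (M : Set (List Label)) : Prop :=
  ∃ u ∈ M, h.Linearizes u

/-- Data independence of an implementation (a set of executions): closed under
renamings, and every execution is a renaming of a differentiated one. -/
def DataIndependentI (I : Set Hist) : Prop :=
  (∀ h ∈ I, ∀ r, h.renameH r ∈ I) ∧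
  (∀ h ∈ I, ∃ h' ∈ I, Differentiated h' ∧ ∃ r, h'.renameH r = h)

/-- Data independence of a specification (a set of sequential executions). -/
def DataIndependentS (S : Set (List Label)) : Prop :=
  (∀ u ∈ S, ∀ r, renameW r u ∈ S) ∧
  (∀ u ∈ S, ∃ u' ∈ S, DiffWord u' ∧ ∃ r, renameW r u' = u)

/-- Projection of a sequential execution onto the set `D` of data values. -/
noncomputable def projW (D : Set ℕ) (u : List Label) : List Label :=
  u.filter (fun l => decide (l.data ∈ D))

/-- A rewriting rule of an inductively defined sequential specification:
`apply x u w` holds when `w` is obtained from `u` by inserting the method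
events prescribed by the rule, all carrying the fresh data value `x`, in a way
satisfying the guard of the rule. -/
structure Rule where
  apply : ℕ → List Label → List Label → Prop

/-- Well-formedness: an application of the rule inserts events with the fresh
value `x` into `u` (removing the `x`-events from `w` gives back `u`). -/
def Rule.Insertion (R : Rule) : Prop :=
  ∀ x u w, R.apply x u w →
    u = w.filter (fun l => decide (l.data ≠ x)) ∧ ∀ l ∈ u, l.data ≠ x

/-- The guard of the rule is closed under projection: projecting onto any set
of data values containing the inserted one preserves applicability. -/
def Rule.ProjClosed (R : Rule) : Prop :=
  ∀ x u w (D : Set ℕ), x ∈ D → R.apply x u w →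
    R.apply x (projW D u) (projW D w)

/-- The sequential specification generated by a set of rules: the words
derivable from the empty word by rule applications. -/
inductive Derivable (Rs : Set Rule) : List Label → Prop
  | nil : Derivable Rs []
  | step (R : Rule) (hR : R ∈ Rs) (x : ℕ) (u w : List Label) :
      Derivable Rs u → R.apply x u w → Derivable Rs w

/-- `w` matches the rule `R` (with some witness `x`): it decomposes as an
application of `R` to some (not necessarily derivable) shorter word. -/
def Matches (R : Rule) (w : List Label) : Prop := ∃ x u, R.apply x u w

/-- Matching set of a rule. -/
def MatchSet (R : Rule) : Set (List Label) := {w | Matches R w}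

/-- Data values of a sequential execution. -/
def wordValsL (u : List Label) : Set ℕ := {d | ∃ l ∈ u, l.data = d}

/-- if every rule of the inductively defined specification has a
guard closed under projection, then the specification itself is closed under
projection onto any subset `D` of data values. -/
theorem spec_closed_under_projection (Rs : Set Rule)
    (hIns : ∀ R ∈ Rs, R.Insertion) (hProj : ∀ R ∈ Rs, R.ProjClosed) :
    ∀ u, Derivable Rs u → ∀ D : Set ℕ, Derivable Rs (projW D u) := by
  intro u hu
  induction hu with
  | nil => intro D; simpa [projW] using Derivable.nil (Rs := Rs)
  | step R hR x u w _ happ ih =>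
    intro D
    by_cases hx : x ∈ D
    · exact Derivable.step R hR x _ _ (ih D) (hProj R hR x u w D hx happ)
    · obtain ⟨hu_eq, -⟩ := hIns R hR x u w happ
      have : projW D w = projW D u := by
        subst hu_eq
        simp only [projW, List.filter_filter]
        apply List.filter_congr
        intro l _
        by_cases hl : l.data ∈ D
        · have : l.data ≠ x := fun h => hx (h ▸ hl)
          simp [hl, this]
        · simp [hl]
      rw [this]; exact ih D
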